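/- (L¹ time regularity of the discrete cumulative distribution) Suppose (x_i, v_i)_{i=1}^N follows the sticky particle Cucker–Smale dynamics associated to masses (m_i)_{i=1}^N and protocol φ. Define M_N(x,t) = −1/2 + Σ_{i=1}^N m_i·1_{x ≥ x_i(t)}. Then for all 0 ≤ s ≤ t, ∫_ℝ |M_N(x,t) − M_N(x,s)| dx ≤ Σ_{i=1}^N m_i |x_i(t) − x_i(s)| ≤ (t − s) · max_{1≤i≤N} |v_i(0)|. -/

import Mathlib

open MeasureTheory Set Filter
open scoped Classical

/-- `Φ(x) = ∫_0^x φ(y) dy`, the odd antiderivative of the communication protocol. -/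
noncomputable def Phi (φ : ℝ → ℝ) (x : ℝ) : ℝ := ∫ y in (0:ℝ)..x, φ y

/-- The sticky particle Cucker–Smale dynamics with `N` particles, masses `m`,
communication protocol `φ`, collision-time set `C`, positions `x` and velocities `v`. -/
structure StickyCS (N : ℕ) (m : Fin N → ℝ) (φ : ℝ → ℝ) (C : Set ℝ)
    (x v : Fin N → ℝ → ℝ) : Prop where
  m_pos : ∀ i, 0 < m i
  m_sum : ∑ i, m i = 1
  φ_nonneg : ∀ z, 0 ≤ φ z
  φ_even : ∀ z, φ (-z) = φ z
  φ_locint : ∀ a b : ℝ, IntervalIntegrable φ volume a b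
  φ_anti : AntitoneOn φ (Ioi 0)
  φ_cont : ContinuousOn φ {(0:ℝ)}ᶜ
  C_fin : C.Finite
  C_pos : C ⊆ Ioi 0
  x_cont : ∀ i, ContinuousOn (x i) (Ici 0)
  x_ord : ∀ i j : Fin N, i ≤ j → ∀ t ∈ Ici (0:ℝ), x i t ≤ x j t
  v_rc : ∀ i, ∀ t ∈ Ici (0:ℝ), ContinuousWithinAt (v i) (Ici t) t
  x_deriv : ∀ i, ∀ t ∈ Ici (0:ℝ) \ C, HasDerivWithinAt (x i) (v i t) (Ici 0) t
  v_deriv : ∀ i, ∀ t ∈ Ici (0:ℝ) \ C, HasDerivWithinAt (v i)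
      (∑ j ∈ Finset.univ.filter (fun j => x j t ≠ x i t),
        m j * φ (x j t - x i t) * (v j t - v i t)) (Ici 0) t
  sticky : ∀ i j : Fin N, ∀ s t : ℝ, 0 ≤ s → s ≤ t → x i s = x j s → x i t = x j t
  collide : ∀ τ ∈ C, ∀ i : Fin N,
      v i τ = (∑ j ∈ Finset.univ.filter (fun j => x j τ = x i τ),
                m j * Function.leftLim (v j) τ)
              / (∑ j ∈ Finset.univ.filter (fun j => x j τ = x i τ), m j)

open scoped Topology

/-! The first inequality is pointwise: `M_N(·, t) - M_N(·, s)` is a weighted sum of differences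
of two Heaviside functions, each of which is `±` the indicator of an interval of length
`|x_i(t) - x_i(s)|`. The second follows from the maximum principle `|v_i(t)| ≤ max_j |v_j(0)|`.
Between collisions the largest velocity cannot increase, because its particle is only pulled
towards slower ones; at a collision the new velocity is a weighted average of left limits. These
left limits exist because `v_i + ∑_j m_j Φ(x_i - x_j)` is locally constant between collisions,
off the finitely many first-contact times. -/

theorem abs_sub_le_of_hasDerivAt_off_finite {f f' : ℝ → ℝ} {E : Set ℝ} (hE : E.Finite)
    {K a b : ℝ} (hab : a ≤ b) (hf : ContinuousOn f (Icc a b))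
    (hf' : ∀ u ∈ Ioo a b \ E, HasDerivAt f (f' u) u) (hK : ∀ u ∈ Ioo a b \ E, |f' u| ≤ K) :
    |f b - f a| ≤ K * (b - a) := by
  induction E, hE using Set.Finite.induction_on generalizing a b with
  | empty =>
    rcases hab.eq_or_lt with rfl | hlt
    · simp
    obtain ⟨c, hc, hfc⟩ :=
      exists_hasDerivAt_eq_slope f f' hlt hf fun u hu => hf' u ⟨hu, notMem_empty u⟩
    rw [eq_div_iff (sub_pos.2 hlt).ne'] at hfc
    rw [← hfc, abs_mul, abs_of_pos (sub_pos.2 hlt)]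
    exact mul_le_mul_of_nonneg_right (hK c ⟨hc, notMem_empty c⟩) (sub_pos.2 hlt).le
  | @insert c E _ _ ih =>
    have off_insert : ∀ {p q}, c ∉ Ioo p q → Ioo p q ⊆ Ioo a b →
        Ioo p q \ E ⊆ Ioo a b \ insert c E :=
      fun hc hsub u hu => ⟨hsub hu.1, by rintro (rfl | huE); exacts [hc hu.1, hu.2 huE]⟩
    by_cases hc : c ∈ Ioo a b
    · have hac : Ioo a c \ E ⊆ Ioo a b \ insert c E :=
        off_insert (fun h => lt_irrefl c h.2) (Ioo_subset_Ioo_right hc.2.le)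
      have hcb : Ioo c b \ E ⊆ Ioo a b \ insert c E :=
        off_insert (fun h => lt_irrefl c h.1) (Ioo_subset_Ioo_left hc.1.le)
      have h₁ := ih hc.1.le (hf.mono (Icc_subset_Icc_right hc.2.le))
        (fun u hu => hf' u (hac hu)) (fun u hu => hK u (hac hu))
      have h₂ := ih hc.2.le (hf.mono (Icc_subset_Icc_left hc.1.le))
        (fun u hu => hf' u (hcb hu)) (fun u hu => hK u (hcb hu))
      calc |f b - f a| ≤ |f b - f c| + |f c - f a| := abs_sub_le _ _ _
        _ ≤ K * (b - a) := by linarith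
    · have hab' : Ioo a b \ E ⊆ Ioo a b \ insert c E := off_insert hc subset_rfl
      exact ih hab hf (fun u hu => hf' u (hab' hu)) (fun u hu => hK u (hab' hu))

theorem sup'_le_sup'_of_hasDerivWithinAt_nonpos_of_isMax {ι : Type*} [Fintype ι] [Nonempty ι]
    {f f' : ι → ℝ → ℝ} {a b : ℝ} (hf : ∀ i, ContinuousOn (f i) (Icc a b))
    (hf' : ∀ i, ∀ t ∈ Ico a b, HasDerivWithinAt (f i) (f' i t) (Ici t) t)
    (hmax : ∀ i, ∀ t ∈ Ico a b, (∀ j, f j t ≤ f i t) → f' i t ≤ 0) :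
    ∀ t ∈ Icc a b, Finset.univ.sup' Finset.univ_nonempty (fun i => f i t) ≤
      Finset.univ.sup' Finset.univ_nonempty (fun i => f i a) := by
  set g : ℝ → ℝ := fun t => Finset.univ.sup' Finset.univ_nonempty fun i => f i t
  have hfg : ∀ i t, f i t ≤ g t := fun i t => Finset.le_sup' (fun i => f i t) (Finset.mem_univ i)
  refine image_le_of_liminf_slope_right_le_deriv_boundary
    (ContinuousOn.finset_sup'_apply _ fun i _ => hf i) le_rfl continuousOn_const
    (fun _ _ => hasDerivWithinAt_const _ _ _) ?_
  intro t ht r hr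
  -- An `f i` attaining the maximum at `t` has right derivative `≤ 0 < r` there, the others stay
  -- strictly below the maximum for a while.
  have below : ∀ i, ∀ᶠ z in 𝓝[>] t, f i z < g t + r * (z - t) := by
    intro i
    rcases (hfg i t).eq_or_lt with hit | hit
    · have hslope : Tendsto (slope (f i) t) (𝓝[>] t) (𝓝 (f' i t)) := by
        simpa only [Ici_sdiff_left] using hasDerivWithinAt_iff_tendsto_slope.1 (hf' i t ht)
      filter_upwards [hslope.eventually_lt_const
        ((hmax i t ht fun j => hit ▸ hfg j t).trans_lt hr), self_mem_nhdsWithin] with z hz hzt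
      rw [slope_def_field, div_lt_iff₀ (sub_pos.2 hzt)] at hz
      linarith
    · have hcont : Tendsto (f i) (𝓝[>] t) (𝓝 (f i t)) :=
        ((hf' i t ht).continuousWithinAt.mono Ioi_subset_Ici_self).tendsto
      filter_upwards [hcont.eventually_lt_const hit, self_mem_nhdsWithin] with z hz hzt
      nlinarith [mem_Ioi.1 hzt]
  refine Eventually.frequently ?_
  filter_upwards [eventually_all.2 below, self_mem_nhdsWithin] with z hz hzt
  rw [slope_def_field, div_lt_iff₀ (sub_pos.2 hzt)]
  linarith [(Finset.sup'_lt_iff Finset.univ_nonempty).2 fun i _ => hz i]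

theorem le_of_hasDerivWithinAt_nonpos_of_isMax {ι : Type*} [Fintype ι] {f f' : ι → ℝ → ℝ}
    {a b B : ℝ} (hf : ∀ i, ContinuousOn (f i) (Icc a b))
    (hf' : ∀ i, ∀ t ∈ Ioo a b, HasDerivWithinAt (f i) (f' i t) (Ici t) t)
    (hmax : ∀ i, ∀ t ∈ Ioo a b, (∀ j, f j t ≤ f i t) → f' i t ≤ 0)
    (ha : ∀ i, f i a ≤ B) : ∀ t ∈ Icc a b, ∀ i, f i t ≤ B := by
  rcases isEmpty_or_nonempty ι with hι | hι
  · exact fun _ _ i => isEmptyElim i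
  set g : ℝ → ℝ := fun t => Finset.univ.sup' Finset.univ_nonempty fun i => f i t
  intro t ht i
  refine (Finset.le_sup' (fun i => f i t) (Finset.mem_univ i)).trans
    ((?_ : g t ≤ g a).trans (Finset.sup'_le _ _ fun i _ => ha i))
  rcases ht.1.eq_or_lt with rfl | hat
  · exact le_rfl
  -- Start at `a' > a`, where the derivatives exist, and let `a'` tend to `a`.
  have hga : Tendsto g (𝓝[>] a) (𝓝 (g a)) :=
    ((ContinuousOn.finset_sup'_apply _ fun i _ => hf i) a ⟨le_rfl, ht.1.trans ht.2⟩
      |>.mono_of_mem_nhdsWithin (Icc_mem_nhdsGT (hat.trans_le ht.2))).tendsto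
  refine ge_of_tendsto hga ?_
  filter_upwards [Ioo_mem_nhdsGT hat] with a' ha'
  have hsub : Icc a' b ⊆ Icc a b := Icc_subset_Icc_left ha'.1.le
  have hsub' : Ico a' b ⊆ Ioo a b := fun u hu => ⟨ha'.1.trans_le hu.1, hu.2⟩
  exact sup'_le_sup'_of_hasDerivWithinAt_nonpos_of_isMax (fun i => (hf i).mono hsub)
    (fun i u hu => hf' i u (hsub' hu)) (fun i u hu => hmax i u (hsub' hu)) t
    ⟨ha'.2.le, ht.2⟩

theorem abs_heaviside_sub_heaviside (a b y : ℝ) :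
    |(if a ≤ y then (1 : ℝ) else 0) - (if b ≤ y then 1 else 0)| =
      (Ico (min a b) (max a b)).indicator 1 y := by
  simp only [indicator_apply, mem_Ico, min_le_iff, lt_max_iff, Pi.one_apply]
  split_ifs <;> grind

theorem integral_abs_sum_heaviside_sub_le {ι : Type*} [Fintype ι] {m : ι → ℝ}
    (hm : ∀ i, 0 ≤ m i) (a b : ι → ℝ) :
    ∫ y, |∑ i, m i * ((if a i ≤ y then (1 : ℝ) else 0) - (if b i ≤ y then 1 else 0))| ≤
      ∑ i, m i * |a i - b i| := by
  set J : ι → Set ℝ := fun i => Ico (min (a i) (b i)) (max (a i) (b i))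
  have hJ : ∀ i, Integrable ((J i).indicator (1 : ℝ → ℝ)) :=
    fun i => (integrable_indicator_iff measurableSet_Ico).2
      (integrableOn_const measure_Ico_lt_top.ne)
  have hvol : ∀ i, ∫ y, (J i).indicator 1 y = |a i - b i| := fun i => by
    rw [integral_indicator_one measurableSet_Ico, measureReal_def, Real.volume_Ico,
      ENNReal.toReal_ofReal (sub_nonneg.2 min_le_max), max_sub_min_eq_abs, abs_sub_comm]
  calc ∫ y, |∑ i, m i * ((if a i ≤ y then (1 : ℝ) else 0) - (if b i ≤ y then 1 else 0))|
      ≤ ∫ y, ∑ i, m i * (J i).indicator 1 y := by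
        refine integral_mono_of_nonneg (Eventually.of_forall fun _ => abs_nonneg _)
          (integrable_finsetSum _ fun i _ => (hJ i).const_mul _) (Eventually.of_forall fun y => ?_)
        refine (Finset.abs_sum_le_sum_abs _ _).trans (Finset.sum_le_sum fun i _ => ?_)
        rw [abs_mul, abs_of_nonneg (hm i), abs_heaviside_sub_heaviside]
    _ = ∑ i, m i * |a i - b i| := by
        rw [integral_finsetSum _ fun i _ => (hJ i).const_mul _]
        simp_rw [integral_const_mul, hvol]

theorem continuous_Phi {φ : ℝ → ℝ} (hφ : ∀ a b, IntervalIntegrable φ volume a b) :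
    Continuous (Phi φ) :=
  intervalIntegral.continuous_primitive hφ 0

theorem hasDerivAt_Phi {φ : ℝ → ℝ} {U : Set ℝ} {z : ℝ} (hφ : IntervalIntegrable φ volume 0 z)
    (hU : IsOpen U) (hcont : ContinuousOn φ U) (hz : z ∈ U) : HasDerivAt (Phi φ) (φ z) z :=
  intervalIntegral.integral_hasDerivAt_right hφ (hcont.stronglyMeasurableAtFilter hU z hz)
    (hcont.continuousAt (hU.mem_nhds hz))

noncomputable def firstContactTime {ι : Type*} (x : ι → ℝ → ℝ) (j k : ι) : ℝ :=
  sInf {u | 0 ≤ u ∧ x j u = x k u}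

noncomputable def interactionPotential {N : ℕ} (m : Fin N → ℝ) (φ : ℝ → ℝ)
    (x : Fin N → ℝ → ℝ) (i : Fin N) (t : ℝ) : ℝ :=
  ∑ j, m j * Phi φ (x i t - x j t)

namespace StickyCS

variable {N : ℕ} {m : Fin N → ℝ} {φ : ℝ → ℝ} {C : Set ℝ} {x v : Fin N → ℝ → ℝ}

theorem hasDerivAt_position (h : StickyCS N m φ C x v) (i : Fin N) {t : ℝ} (ht : 0 < t)
    (htC : t ∉ C) : HasDerivAt (x i) (v i t) t :=
  (h.x_deriv i t ⟨ht.le, htC⟩).hasDerivAt (Ici_mem_nhds ht)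

theorem hasDerivAt_velocity (h : StickyCS N m φ C x v) (i : Fin N) {t : ℝ} (ht : 0 < t)
    (htC : t ∉ C) :
    HasDerivAt (v i) (∑ j ∈ Finset.univ.filter (fun j => x j t ≠ x i t),
      m j * φ (x j t - x i t) * (v j t - v i t)) t :=
  (h.v_deriv i t ⟨ht.le, htC⟩).hasDerivAt (Ici_mem_nhds ht)

theorem velocity_mem_Icc_of_no_collision (h : StickyCS N m φ C x v) {a b A B : ℝ}
    (ha : 0 ≤ a) (hC : ∀ u ∈ Ioc a b, u ∉ C) (hA : ∀ j, v j a ∈ Icc A B) :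
    ∀ t ∈ Icc a b, ∀ i, v i t ∈ Icc A B := by
  set D : Fin N → ℝ → ℝ := fun i t => ∑ j ∈ Finset.univ.filter (fun j => x j t ≠ x i t),
    m j * φ (x j t - x i t) * (v j t - v i t)
  have hcont : ∀ i, ContinuousOn (v i) (Icc a b) := fun i u hu => by
    rcases hu.1.eq_or_lt with rfl | hau
    · exact (h.v_rc i _ ha).mono Icc_subset_Ici_self
    · exact (h.hasDerivAt_velocity i (ha.trans_lt hau) (hC u ⟨hau, hu.2⟩)).continuousAt
        |>.continuousWithinAt
  have hderiv : ∀ i, ∀ t ∈ Ioo a b, HasDerivWithinAt (v i) (D i t) (Ici t) t := fun i t ht =>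
    (h.hasDerivAt_velocity i (ha.trans_lt ht.1) (hC t ⟨ht.1, ht.2.le⟩)).hasDerivWithinAt
  have hweight : ∀ i j t, 0 ≤ m j * φ (x j t - x i t) := fun i j t =>
    mul_nonneg (h.m_pos j).le (h.φ_nonneg _)
  have upper := le_of_hasDerivWithinAt_nonpos_of_isMax hcont hderiv
    (fun i t _ hmax => Finset.sum_nonpos fun j _ =>
      mul_nonpos_of_nonneg_of_nonpos (hweight i j t) (sub_nonpos.2 (hmax j)))
    fun i => (hA i).2
  have lower := le_of_hasDerivWithinAt_nonpos_of_isMax (f := fun i t => -v i t)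
    (f' := fun i t => -D i t) (fun i => (hcont i).neg) (fun i t ht => (hderiv i t ht).neg)
    (fun i t _ hmin => neg_nonpos.2 <| Finset.sum_nonneg fun j _ =>
      mul_nonneg (hweight i j t) (sub_nonneg.2 (neg_le_neg_iff.1 (hmin j))))
    fun i => neg_le_neg (hA i).1
  exact fun t ht i => ⟨neg_le_neg_iff.1 (lower t ht i), upper t ht i⟩

theorem eventually_eq_of_firstContactTime_ne (h : StickyCS N m φ C x v) {j k : Fin N} {t : ℝ}
    (ht : 0 ≤ t) (hjk : x j t = x k t) (hne : firstContactTime x j k ≠ t) :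
    ∀ᶠ u in 𝓝 t, x j u = x k u := by
  set E : Set ℝ := {u | 0 ≤ u ∧ x j u = x k u}
  have hE : IsClosed E := by
    have : E = Ici 0 ∩ (fun u => x j u - x k u) ⁻¹' {0} := by
      ext u
      simp [E, sub_eq_zero]
    rw [this]
    exact ((h.x_cont j).sub (h.x_cont k)).preimage_isClosed_of_isClosed isClosed_Ici
      isClosed_singleton
  have hbdd : BddBelow E := ⟨0, fun u hu => hu.1⟩
  have hmem : firstContactTime x j k ∈ E := hE.csInf_mem ⟨t, ht, hjk⟩ hbdd
  have hlt : firstContactTime x j k < t := (csInf_le hbdd ⟨ht, hjk⟩).lt_of_ne hne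
  filter_upwards [Ioi_mem_nhds hlt] with u hu
  exact h.sticky j k _ u hmem.1 hu.le hmem.2

theorem continuousOn_interactionPotential (h : StickyCS N m φ C x v) (i : Fin N) :
    ContinuousOn (interactionPotential m φ x i) (Ici 0) :=
  continuousOn_finsetSum _ fun j _ => continuousOn_const.mul
    ((continuous_Phi h.φ_locint).comp_continuousOn ((h.x_cont i).sub (h.x_cont j)))

theorem hasDerivAt_velocity_add_interactionPotential (h : StickyCS N m φ C x v) (i : Fin N)
    {t : ℝ} (ht : 0 < t) (htC : t ∉ C) (hF : ∀ j k, firstContactTime x j k ≠ t) :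
    HasDerivAt (fun u => v i u + interactionPotential m φ x i u) 0 t := by
  have hterm : ∀ j, HasDerivAt (fun u => m j * Phi φ (x i u - x j u))
      (-if x j t ≠ x i t then m j * φ (x j t - x i t) * (v j t - v i t) else 0) t := by
    intro j
    by_cases hji : x j t = x i t
    · simp only [hji, ne_eq, not_true_eq_false, if_false, neg_zero]
      apply (hasDerivAt_const t (m j * Phi φ 0)).congr_of_eventuallyEq
      filter_upwards [h.eventually_eq_of_firstContactTime_ne ht.le hji.symm (hF i j)] with u hu
      rw [hu, sub_self]
    · have hPhi := hasDerivAt_Phi (h.φ_locint 0 _) isOpen_compl_singleton h.φ_cont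
        (sub_ne_zero.2 (Ne.symm hji))
      refine ((hPhi.comp t ((h.hasDerivAt_position i ht htC).sub
        (h.hasDerivAt_position j ht htC))).const_mul (m j)).congr_deriv ?_
      rw [if_pos hji, ← neg_sub (x j t), h.φ_even]
      ring
  refine ((h.hasDerivAt_velocity i ht htC).add
    (HasDerivAt.fun_sum fun j _ => hterm j)).congr_deriv ?_
  rw [Finset.sum_neg_distrib, ← Finset.sum_filter, add_neg_cancel]

theorem exists_tendsto_velocity_nhdsLT (h : StickyCS N m φ C x v) (i : Fin N) {τ : ℝ}
    (hτ : 0 < τ) : ∃ L, Tendsto (v i) (𝓝[<] τ) (𝓝 L) := by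
  have hfree : ∀ᶠ u in 𝓝[<] τ, 0 < u ∧ u ∉ C := by
    filter_upwards [nhdsWithin_le_nhds (Ioi_mem_nhds hτ),
      nhdsWithin_le_nhds ((h.C_fin.sdiff (t := {τ})).isClosed.compl_mem_nhds (by simp)),
      self_mem_nhdsWithin] with u hu hCu hut
    exact ⟨hu, fun huC => hCu ⟨huC, hut.ne⟩⟩
  obtain ⟨σ, hστ : σ < τ, hσ⟩ := mem_nhdsLT_iff_exists_Ioo_subset.1 hfree
  set P := interactionPotential m φ x i
  set w : ℝ → ℝ := fun u => v i u + P u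
  obtain ⟨p, hp⟩ : (Ioo σ τ).Nonempty := nonempty_Ioo.2 hστ
  have hw_cont : ∀ u ∈ Ioo σ τ, ContinuousAt w u := fun u hu =>
    (h.hasDerivAt_velocity i (hσ hu).1 (hσ hu).2).continuousAt.add
      ((h.continuousOn_interactionPotential i).continuousAt (Ici_mem_nhds (hσ hu).1))
  have hw_const : ∀ u ∈ Ioo p τ, w u = w p := fun u hu => by
    have hsub : Icc p u ⊆ Ioo σ τ := Icc_subset_Ioo hp.1 hu.2
    have hfree' : ∀ r ∈ Ioo p u, 0 < r ∧ r ∉ C := fun r hr => hσ (hsub (Ioo_subset_Icc_self hr))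
    have := abs_sub_le_of_hasDerivAt_off_finite (f' := 0) (K := 0)
      (Set.finite_range fun jk : Fin N × Fin N => firstContactTime x jk.1 jk.2) hu.1.le
      (fun r hr => (hw_cont r (hsub hr)).continuousWithinAt)
      (fun r hr => h.hasDerivAt_velocity_add_interactionPotential i (hfree' r hr.1).1
        (hfree' r hr.1).2 fun j k hjk => hr.2 ⟨(j, k), hjk⟩)
      (fun _ _ => by simp)
    simpa [sub_eq_zero] using this
  have hP : Tendsto P (𝓝[<] τ) (𝓝 (P τ)) :=
    ((h.continuousOn_interactionPotential i) τ hτ.le).mono_of_mem_nhdsWithin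
      (mem_of_superset (Ioo_mem_nhdsLT hp.2) fun u hu => (hσ ⟨hp.1.trans hu.1, hu.2⟩).1.le)
      |>.tendsto
  refine ⟨w p - P τ, (tendsto_const_nhds.sub hP).congr' ?_⟩
  filter_upwards [Ioo_mem_nhdsLT hp.2] with u hu
  have := hw_const u hu
  simp only [w] at this ⊢
  linarith

theorem velocity_mem_Icc_of_collision (h : StickyCS N m φ C x v) {τ A B : ℝ} (hτ : τ ∈ C)
    (hbefore : ∀ u ∈ Ico 0 τ, ∀ j, v j u ∈ Icc A B) (i : Fin N) : v i τ ∈ Icc A B := by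
  have hL : ∀ j, Function.leftLim (v j) τ ∈ Icc A B := fun j => by
    obtain ⟨L, hL⟩ := h.exists_tendsto_velocity_nhdsLT j (h.C_pos hτ)
    rw [leftLim_eq_of_tendsto hL]
    refine isClosed_Icc.mem_of_tendsto hL ?_
    filter_upwards [Ioo_mem_nhdsLT (h.C_pos hτ)] with u hu
    exact hbefore u ⟨hu.1.le, hu.2⟩ j
  have := (convex_Icc A B).centerMass_mem (t := Finset.univ.filter (fun j => x j τ = x i τ))
    (w := m) (z := fun j => Function.leftLim (v j) τ) (fun j _ => (h.m_pos j).le)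
    (Finset.sum_pos (fun j _ => h.m_pos j) ⟨i, by simp⟩) (fun j _ => hL j)
  rw [h.collide τ hτ i]
  simpa only [Finset.centerMass, smul_eq_mul, div_eq_inv_mul] using this

theorem velocity_mem_Icc (h : StickyCS N m φ C x v) {A B : ℝ} (h0 : ∀ j, v j 0 ∈ Icc A B) :
    ∀ t, 0 ≤ t → ∀ i, v i t ∈ Icc A B := by
  suffices key : ∀ s : Finset ℝ, ∀ t, 0 ≤ t → (∀ c ∈ C, c ≤ t → c ∈ s) → ∀ i, v i t ∈ Icc A B from
    fun t ht => key h.C_fin.toFinset t ht fun c hc _ => h.C_fin.mem_toFinset.2 hc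
  intro s
  induction s using Finset.induction_on_max with
  | empty =>
    exact fun t ht hC => h.velocity_mem_Icc_of_no_collision le_rfl
      (fun u hu huC => by simpa using hC u huC hu.2) h0 t ⟨ht, le_rfl⟩
  | insert σ s hs ih =>
    intro t ht hC
    have hC' : ∀ c ∈ C, c ≤ t → c ≠ σ → c ∈ s := fun c hc hct hcσ =>
      (Finset.mem_insert.1 (hC c hc hct)).resolve_left hcσ
    by_cases hσ : σ ∈ C ∧ σ ≤ t
    · obtain ⟨hσC, hσt⟩ := hσ
      have hσv := h.velocity_mem_Icc_of_collision hσC fun u hu => ih u hu.1 fun c hc hcu =>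
        hC' c hc (hcu.trans (hu.2.le.trans hσt)) (hcu.trans_lt hu.2).ne
      refine h.velocity_mem_Icc_of_no_collision (h.C_pos hσC).le (fun u hu huC => ?_) hσv
        t ⟨hσt, le_rfl⟩
      exact (hs u (hC' u huC hu.2 hu.1.ne')).not_gt hu.1
    · exact ih t ht fun c hc hct => hC' c hc hct fun hcσ => hσ ⟨hcσ ▸ hc, hcσ ▸ hct⟩

theorem abs_position_sub_le (h : StickyCS N m φ C x v) {i : Fin N} {s t V : ℝ} (hs : 0 ≤ s)
    (hst : s ≤ t) (hV : ∀ u, 0 ≤ u → |v i u| ≤ V) : |x i t - x i s| ≤ V * (t - s) :=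
  abs_sub_le_of_hasDerivAt_off_finite (f' := v i) h.C_fin hst
    ((h.x_cont i).mono fun _ hu => hs.trans hu.1)
    (fun _ hu => h.hasDerivAt_position i (hs.trans_lt hu.1.1) hu.2)
    (fun u hu => hV u (hs.trans hu.1.1.le))

end StickyCS

/-- **L¹ time regularity of the discrete cumulative distribution.**
With `M_N(x,t) = −1/2 + Σ_i m_i 1_{x ≥ x_i(t)}`, for all `0 ≤ s ≤ t`:
`∫ |M_N(·,t) − M_N(·,s)| ≤ Σ_i m_i |x_i(t) − x_i(s)| ≤ (t − s)·max_i |v_i(0)|`. -/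
theorem sticky_CS_L1_time_regularity {N : ℕ} (hN : 0 < N) (m : Fin N → ℝ) (φ : ℝ → ℝ)
    (C : Set ℝ) (x v : Fin N → ℝ → ℝ) (h : StickyCS N m φ C x v)
    (MN : ℝ → ℝ → ℝ)
    (hMN : ∀ y t, MN y t = -(1/2) + ∑ i, m i * (if x i t ≤ y then (1:ℝ) else 0))
    (s t : ℝ) (hs : 0 ≤ s) (hst : s ≤ t) :
    (∫ y : ℝ, |MN y t - MN y s|) ≤ ∑ i, m i * |x i t - x i s| ∧
    ∑ i, m i * |x i t - x i s|
      ≤ (t - s) * Finset.univ.sup' ⟨⟨0, hN⟩, Finset.mem_univ _⟩ (fun i => |v i 0|) := by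
  set V := Finset.univ.sup' ⟨⟨0, hN⟩, Finset.mem_univ _⟩ (fun i => |v i 0|)
  have hv : ∀ i, ∀ u, 0 ≤ u → |v i u| ≤ V := fun i u hu => abs_le.2 <|
    h.velocity_mem_Icc (fun j => abs_le.1 (Finset.le_sup' (fun i => |v i 0|) (Finset.mem_univ j)))
      u hu i
  have hdiff : ∀ y, MN y t - MN y s =
      ∑ i, m i * ((if x i t ≤ y then (1 : ℝ) else 0) - if x i s ≤ y then 1 else 0) := fun y => by
    simp only [hMN, mul_sub, Finset.sum_sub_distrib]
    ring
  refine ⟨?_, ?_⟩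
  · simp_rw [hdiff]
    exact integral_abs_sum_heaviside_sub_le (fun i => (h.m_pos i).le) _ _
  · calc ∑ i, m i * |x i t - x i s| ≤ ∑ i, m i * (V * (t - s)) :=
          Finset.sum_le_sum fun i _ => mul_le_mul_of_nonneg_left
            (h.abs_position_sub_le hs hst (hv i)) (h.m_pos i).le
      _ = (t - s) * V := by rw [← Finset.sum_mul, h.m_sum]; ring
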